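/- Let ω be the block partial permutation [[I_{r₁}, 0, 0, 0], [0, 0, I_{r₂}, 0], [0, 0, 0, 0]] in M_{m,n}(ℝ), Q ∈ X_ω, and B ∈ M_{m,n}(ℝ) a matrix whose last r₂ + n₂ columns are zero; write the rows of B's left block as B₁, …, B_m ∈ ℝ^{r₁+n₁}. Since rk(Q_{[r₁, r₁+n₁]}) = rk(Q_{[r₁, n]}) = r₁, every vector v in the row space R(Q_{[m, r₁+n₁]}) extends uniquely to a row vector (v, f(v)) ∈ R(Q_{[r₁, n]}). Define t_r(B) to be the matrix whose i-th row is (pr_R(B_i), f(pr_R(B_i))), where pr_R is orthogonal projection onto R(Q_{[m, r₁+n₁]}). Then Q + s·t_r(B) ∈ X̄_ω for all s ∈ ℝ, so t_r(B) is tangent to X_ω at Q. -/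

import Mathlib

/-! Each row of `t_r(B)` has the form `(v, f v)` with `v` in the row space of the left block,
so by the choice of `f` it is a combination of the first `r₁` rows of `Q`. Adding such rows
cannot raise the rank of an upper-left `p × q` submatrix with `p ≥ r₁`, whose rank is that of `ω`
because `Q ∈ X_ω`; for `p < r₁` the bound imposed by `ω` is `min p q` and holds for every matrix.
So the whole line `Q + s t_r(B)` lies in `X̄_ω`. Rank is lower semicontinuous, hence `X_ω` is
relatively open in `X̄_ω` and the line stays in `X_ω` for small `s`. -/

/-- Upper-left `p × q` submatrix. -/
def ulSub {m n : ℕ} (A : Matrix (Fin m) (Fin n) ℝ) (p q : ℕ) (hp : p ≤ m) (hq : q ≤ n) :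
    Matrix (Fin p) (Fin q) ℝ :=
  A.submatrix (Fin.castLE hp) (Fin.castLE hq)

/-- The block partial permutation `[[I_{r₁},0,0,0],[0,0,I_{r₂},0],[0,0,0,0]]`. -/
def omegaBlk (r₁ r₂ m₁ n₁ n₂ : ℕ) :
    Matrix (Fin (r₁ + r₂ + m₁)) (Fin (r₁ + n₁ + r₂ + n₂)) ℝ :=
  Matrix.of fun i j =>
    if (i.val < r₁ ∧ j.val = i.val) ∨
        (r₁ ≤ i.val ∧ i.val < r₁ + r₂ ∧ j.val = i.val + n₁) then 1 else 0

/-- Membership in the regular part `X_ω`. -/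
def memX {m n : ℕ} (ω A : Matrix (Fin m) (Fin n) ℝ) : Prop :=
  ∀ (p q : ℕ) (_ : 1 ≤ p) (_ : 1 ≤ q) (hp : p ≤ m) (hq : q ≤ n),
    (ulSub A p q hp hq).rank = (ulSub ω p q hp hq).rank

/-- Membership in the matrix Schubert variety `X̄_ω`. -/
def memXbar {m n : ℕ} (ω A : Matrix (Fin m) (Fin n) ℝ) : Prop :=
  ∀ (p q : ℕ) (_ : 1 ≤ p) (_ : 1 ≤ q) (hp : p ≤ m) (hq : q ≤ n),
    (ulSub A p q hp hq).rank ≤ (ulSub ω p q hp hq).rank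

/-- The row of index `i` of the left `(r₁+n₁)`-block of an `m × n` matrix. -/
def leftRow (r₁ r₂ m₁ n₁ n₂ : ℕ)
    (A : Matrix (Fin (r₁ + r₂ + m₁)) (Fin (r₁ + n₁ + r₂ + n₂)) ℝ)
    (i : Fin (r₁ + r₂ + m₁)) : EuclideanSpace ℝ (Fin (r₁ + n₁)) :=
  WithLp.toLp 2 fun j => A i ⟨j.val, by have := j.isLt; omega⟩

/-- The row space `R(Q_{[m, r₁+n₁]})` of the left block of `Q`. -/
noncomputable def rowSpaceLeft (r₁ r₂ m₁ n₁ n₂ : ℕ)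
    (Q : Matrix (Fin (r₁ + r₂ + m₁)) (Fin (r₁ + n₁ + r₂ + n₂)) ℝ) :
    Submodule ℝ (EuclideanSpace ℝ (Fin (r₁ + n₁))) :=
  Submodule.span ℝ (Set.range (leftRow r₁ r₂ m₁ n₁ n₂ Q))

/-- The row space `R(Q_{[r₁, n]})` of the top `r₁` rows of `Q`. -/
noncomputable def rowSpaceTop (r₁ r₂ m₁ n₁ n₂ : ℕ)
    (Q : Matrix (Fin (r₁ + r₂ + m₁)) (Fin (r₁ + n₁ + r₂ + n₂)) ℝ) :
    Submodule ℝ (EuclideanSpace ℝ (Fin (r₁ + n₁ + r₂ + n₂))) :=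
  Submodule.span ℝ (Set.range fun i : Fin r₁ =>
    (show EuclideanSpace ℝ (Fin (r₁ + n₁ + r₂ + n₂)) from
      WithLp.toLp 2 fun j => Q ⟨i.val, by have := i.isLt; omega⟩ j))

/-- Concatenation `(v, w)` of a vector of length `r₁+n₁` and one of length `r₂+n₂`. -/
def concatVec (r₁ n₁ r₂ n₂ : ℕ) (v : Fin (r₁ + n₁) → ℝ) (w : Fin (r₂ + n₂) → ℝ) :
    Fin (r₁ + n₁ + r₂ + n₂) → ℝ :=
  fun j =>
    if h : j.val < r₁ + n₁ then v ⟨j.val, h⟩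
    else w ⟨j.val - (r₁ + n₁), by have := j.isLt; omega⟩

/-- The vector `t_r(B)`, whose `i`-th row is `(pr_R(B_i), f(pr_R(B_i)))`. -/
noncomputable def tr (r₁ r₂ m₁ n₁ n₂ : ℕ)
    (Q B : Matrix (Fin (r₁ + r₂ + m₁)) (Fin (r₁ + n₁ + r₂ + n₂)) ℝ)
    (f : EuclideanSpace ℝ (Fin (r₁ + n₁)) →ₗ[ℝ] (Fin (r₂ + n₂) → ℝ)) :
    Matrix (Fin (r₁ + r₂ + m₁)) (Fin (r₁ + n₁ + r₂ + n₂)) ℝ :=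
  Matrix.of fun i j =>
    concatVec r₁ n₁ r₂ n₂
      (fun j' => (Submodule.orthogonalProjectionOnto (rowSpaceLeft r₁ r₂ m₁ n₁ n₂ Q)
        (leftRow r₁ r₂ m₁ n₁ n₂ B i) : EuclideanSpace ℝ (Fin (r₁ + n₁))) j')
      (f (Submodule.orthogonalProjectionOnto (rowSpaceLeft r₁ r₂ m₁ n₁ n₂ Q)
        (leftRow r₁ r₂ m₁ n₁ n₂ B i))) j

open Filter Matrix Module Submodule Topology Set

theorem Matrix.eventually_rank_le {𝕜 : Type*} [NontriviallyNormedField 𝕜] [CompleteSpace 𝕜]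
    {m n : Type*} [Fintype m] [Fintype n] (A : Matrix m n 𝕜) :
    ∀ᶠ B in 𝓝 A, A.rank ≤ B.rank := by
  classical
  let toCLM : Matrix m n 𝕜 →ₗ[𝕜] (n → 𝕜) →L[𝕜] (m → 𝕜) :=
    LinearMap.toContinuousLinearMap.toLinearMap ∘ₗ Matrix.toLin'.toLinearMap
  have rank_toCLM (B : Matrix m n 𝕜) : (toCLM B : (n → 𝕜) →ₗ[𝕜] (m → 𝕜)).rank = B.rank := by
    have : (toCLM B : (n → 𝕜) →ₗ[𝕜] (m → 𝕜)) = B.mulVecLin := by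
      ext; simp [toCLM]
    rw [this, LinearMap.rank, Matrix.rank, finrank_eq_rank]
  have hopen := (isOpen_setOfPred_nat_le_rank (𝕜 := 𝕜) A.rank).preimage
    (LinearMap.continuous_of_finiteDimensional toCLM)
  have hA : A ∈ toCLM ⁻¹' {f | A.rank ≤ (f : (n → 𝕜) →ₗ[𝕜] (m → 𝕜)).rank} := by
    simp [rank_toCLM]
  filter_upwards [hopen.mem_nhds hA] with B hB
  simpa [rank_toCLM] using hB

theorem Matrix.rank_le_rank_of_row_mem_span {R : Type*} [Field R] {m m' n : Type*} [Fintype m]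
    [Fintype m'] [Fintype n] (A : Matrix m n R) (B : Matrix m' n R)
    (h : ∀ i, B i ∈ span R (range A)) : B.rank ≤ A.rank := by
  rw [B.rank_eq_finrank_span_row, A.rank_eq_finrank_span_row]
  exact finrank_mono (span_le.2 (range_subset_iff.2 h))

theorem mem_tangentConeAt_of_eventually_add_smul_mem {𝕜 E : Type*} [NontriviallyNormedField 𝕜]
    [AddCommGroup E] [Module 𝕜 E] [TopologicalSpace E] [ContinuousSMul 𝕜 E] {s : Set E} {x y : E}
    (h : ∀ᶠ c in 𝓝 (0 : 𝕜), x + c • y ∈ s) : y ∈ tangentConeAt 𝕜 s x :=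
  mem_tangentConeAt_of_add_smul_mem tendsto_id (nhdsWithin_le_nhds h)

theorem ulSub_ulSub {m n : ℕ} (A : Matrix (Fin m) (Fin n) ℝ) {p q k l : ℕ} (hp : p ≤ m)
    (hq : q ≤ n) (hk : k ≤ p) (hl : l ≤ q) :
    ulSub (ulSub A p q hp hq) k l hk hl = ulSub A k l (hk.trans hp) (hl.trans hq) := rfl

theorem rank_ulSub_add_le {m n r : ℕ} (A T : Matrix (Fin m) (Fin n) ℝ) (hr : r ≤ m)
    (hT : ∀ i, T i ∈ span ℝ (range fun k : Fin r => A (Fin.castLE hr k)))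
    {p q : ℕ} (hp : p ≤ m) (hq : q ≤ n) (hrp : r ≤ p) :
    (ulSub (A + T) p q hp hq).rank ≤ (ulSub A p q hp hq).rank := by
  refine rank_le_rank_of_row_mem_span _ _ fun i => ?_
  obtain ⟨c, hc⟩ := (mem_span_range_iff_exists_fun ℝ).1 (hT (Fin.castLE hp i))
  have hrow : ulSub (A + T) p q hp hq i
      = ulSub A p q hp hq i + ∑ k, c k • ulSub A p q hp hq (Fin.castLE hrp k) := by
    ext j
    simp [ulSub, ← hc, Finset.sum_apply]
  rw [hrow]
  exact add_mem (subset_span ⟨i, rfl⟩)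
    (sum_mem fun k _ => smul_mem _ _ (subset_span ⟨_, rfl⟩))

theorem ulSub_omegaBlk_self {r₁ r₂ m₁ n₁ n₂ k : ℕ} (hk : k ≤ r₁) (hkm : k ≤ r₁ + r₂ + m₁)
    (hkn : k ≤ r₁ + n₁ + r₂ + n₂) :
    ulSub (omegaBlk r₁ r₂ m₁ n₁ n₂) k k hkm hkn = 1 := by
  ext i j
  simp only [ulSub, omegaBlk, submatrix_apply, of_apply, Fin.val_castLE, one_apply, Fin.ext_iff]
  grind

theorem rank_ulSub_le_rank_ulSub_omegaBlk {r₁ r₂ m₁ n₁ n₂ p q : ℕ}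
    (A : Matrix (Fin (r₁ + r₂ + m₁)) (Fin (r₁ + n₁ + r₂ + n₂)) ℝ) (hp : p ≤ r₁ + r₂ + m₁)
    (hq : q ≤ r₁ + n₁ + r₂ + n₂) (hpr : p ≤ r₁) :
    (ulSub A p q hp hq).rank ≤ (ulSub (omegaBlk r₁ r₂ m₁ n₁ n₂) p q hp hq).rank :=
  calc (ulSub A p q hp hq).rank
      ≤ min p q := le_min (rank_le_height _) (rank_le_width _)
    _ = (1 : Matrix (Fin (min p q)) (Fin (min p q)) ℝ).rank := by simp
    _ = (ulSub (ulSub (omegaBlk r₁ r₂ m₁ n₁ n₂) p q hp hq) _ _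
          (min_le_left p q) (min_le_right p q)).rank := by
        rw [ulSub_ulSub, ulSub_omegaBlk_self ((min_le_left p q).trans hpr)]
    _ ≤ _ := rank_submatrix_le _ _ _

theorem tr_row_mem_span_top_rows {r₁ r₂ m₁ n₁ n₂ : ℕ}
    {Q B : Matrix (Fin (r₁ + r₂ + m₁)) (Fin (r₁ + n₁ + r₂ + n₂)) ℝ}
    {f : EuclideanSpace ℝ (Fin (r₁ + n₁)) →ₗ[ℝ] (Fin (r₂ + n₂) → ℝ)}
    (hf : ∀ v ∈ rowSpaceLeft r₁ r₂ m₁ n₁ n₂ Q,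
      (show EuclideanSpace ℝ (Fin (r₁ + n₁ + r₂ + n₂)) from
        WithLp.toLp 2 (concatVec r₁ n₁ r₂ n₂ (fun j => v j) (f v))) ∈ rowSpaceTop r₁ r₂ m₁ n₁ n₂ Q)
    (i : Fin (r₁ + r₂ + m₁)) :
    tr r₁ r₂ m₁ n₁ n₂ Q B f i ∈
      span ℝ (range fun k : Fin r₁ => Q (Fin.castLE (by omega) k)) := by
  have h := hf _ (orthogonalProjectionOnto _ (leftRow r₁ r₂ m₁ n₁ n₂ B i)).2
  obtain ⟨c, hc⟩ := (mem_span_range_iff_exists_fun ℝ).1 h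
  refine (mem_span_range_iff_exists_fun ℝ).2 ⟨c, ?_⟩
  have h_ofLp := congrArg WithLp.ofLp hc
  simp only [WithLp.ofLp_sum, WithLp.ofLp_smul] at h_ofLp
  exact h_ofLp

theorem memXbar_omegaBlk_add {r₁ r₂ m₁ n₁ n₂ : ℕ}
    {Q T : Matrix (Fin (r₁ + r₂ + m₁)) (Fin (r₁ + n₁ + r₂ + n₂)) ℝ}
    (hQ : memX (omegaBlk r₁ r₂ m₁ n₁ n₂) Q)
    (hT : ∀ i, T i ∈ span ℝ (range fun k : Fin r₁ => Q (Fin.castLE (by omega) k))) :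
    memXbar (omegaBlk r₁ r₂ m₁ n₁ n₂) (Q + T) := by
  intro p q h1p h1q hp hq
  rcases le_total r₁ p with hrp | hpr
  · exact (rank_ulSub_add_le Q T _ hT hp hq hrp).trans (hQ p q h1p h1q hp hq).le
  · exact rank_ulSub_le_rank_ulSub_omegaBlk _ hp hq hpr

theorem eventually_memXbar_imp_memX {m n : ℕ} {ω Q : Matrix (Fin m) (Fin n) ℝ} (hQ : memX ω Q) :
    ∀ᶠ A in 𝓝 Q, memXbar ω A → memX ω A := by
  have h : ∀ᶠ A in 𝓝 Q, ∀ (p : Fin (m + 1)) (q : Fin (n + 1)) (hp : (p : ℕ) ≤ m) (hq : (q : ℕ) ≤ n),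
      (ulSub Q p q hp hq).rank ≤ (ulSub A p q hp hq).rank := by
    refine eventually_all.2 fun p => eventually_all.2 fun q => eventually_all.2 fun hp =>
      eventually_all.2 fun hq => ?_
    exact ((continuous_id.matrix_submatrix _ _).tendsto Q).eventually (eventually_rank_le _)
  filter_upwards [h] with A hA hAbar p q h1p h1q hp hq
  exact (hAbar p q h1p h1q hp hq).antisymm
    ((hQ p q h1p h1q hp hq).symm.le.trans (hA ⟨p, by omega⟩ ⟨q, by omega⟩ hp hq))

theorem tr_tangent_general (r₁ r₂ m₁ n₁ n₂ : ℕ)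
    (Q : Matrix (Fin (r₁ + r₂ + m₁)) (Fin (r₁ + n₁ + r₂ + n₂)) ℝ)
    (hQ : memX (omegaBlk r₁ r₂ m₁ n₁ n₂) Q)
    (f : EuclideanSpace ℝ (Fin (r₁ + n₁)) →ₗ[ℝ] (Fin (r₂ + n₂) → ℝ))
    (hf : ∀ v ∈ rowSpaceLeft r₁ r₂ m₁ n₁ n₂ Q,
      (show EuclideanSpace ℝ (Fin (r₁ + n₁ + r₂ + n₂)) from
        WithLp.toLp 2 (concatVec r₁ n₁ r₂ n₂ (fun j => v j) (f v))) ∈ rowSpaceTop r₁ r₂ m₁ n₁ n₂ Q)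
    (B : Matrix (Fin (r₁ + r₂ + m₁)) (Fin (r₁ + n₁ + r₂ + n₂)) ℝ) :
    (∀ s : ℝ, memXbar (omegaBlk r₁ r₂ m₁ n₁ n₂) (Q + s • tr r₁ r₂ m₁ n₁ n₂ Q B f)) ∧
    tr r₁ r₂ m₁ n₁ n₂ Q B f ∈
      tangentConeAt ℝ {A | memX (omegaBlk r₁ r₂ m₁ n₁ n₂) A} Q := by
  have hXbar (s : ℝ) : memXbar (omegaBlk r₁ r₂ m₁ n₁ n₂) (Q + s • tr r₁ r₂ m₁ n₁ n₂ Q B f) :=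
    memXbar_omegaBlk_add hQ fun i => smul_mem _ s (tr_row_mem_span_top_rows hf i)
  refine ⟨hXbar, mem_tangentConeAt_of_eventually_add_smul_mem ?_⟩
  have hline : Tendsto (fun s : ℝ => Q + s • tr r₁ r₂ m₁ n₁ n₂ Q B f) (𝓝 0) (𝓝 Q) :=
    Continuous.tendsto' (by fun_prop) 0 Q (by simp)
  exact (hline.eventually (eventually_memXbar_imp_memX hQ)).mono fun s hs => hs (hXbar s)

/-- Lemma 5.10: with `f` the linear map sending each `v` in the row
space of the left block of `Q` to the unique `f(v)` with `(v, f(v))` in the row space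
of the top `r₁` rows of `Q`, and `B` a matrix whose last `r₂+n₂` columns vanish,
`Q + s · t_r(B)` lies in `X̄_ω` for all `s`; in particular `t_r(B)` is tangent to
`X_ω` at `Q`. -/
theorem tr_tangent (r₁ r₂ m₁ n₁ n₂ : ℕ)
    (Q : Matrix (Fin (r₁ + r₂ + m₁)) (Fin (r₁ + n₁ + r₂ + n₂)) ℝ)
    (hQ : memX (omegaBlk r₁ r₂ m₁ n₁ n₂) Q)
    (f : EuclideanSpace ℝ (Fin (r₁ + n₁)) →ₗ[ℝ] (Fin (r₂ + n₂) → ℝ))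
    (hf : ∀ v ∈ rowSpaceLeft r₁ r₂ m₁ n₁ n₂ Q,
      (show EuclideanSpace ℝ (Fin (r₁ + n₁ + r₂ + n₂)) from
        WithLp.toLp 2 (concatVec r₁ n₁ r₂ n₂ (fun j => v j) (f v))) ∈ rowSpaceTop r₁ r₂ m₁ n₁ n₂ Q)
    (B : Matrix (Fin (r₁ + r₂ + m₁)) (Fin (r₁ + n₁ + r₂ + n₂)) ℝ)
    (hB : ∀ i j, r₁ + n₁ ≤ j.val → B i j = 0) :
    (∀ s : ℝ, memXbar (omegaBlk r₁ r₂ m₁ n₁ n₂) (Q + s • tr r₁ r₂ m₁ n₁ n₂ Q B f)) ∧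
    tr r₁ r₂ m₁ n₁ n₂ Q B f ∈
      tangentConeAt ℝ {A | memX (omegaBlk r₁ r₂ m₁ n₁ n₂) A} Q :=
  tr_tangent_general r₁ r₂ m₁ n₁ n₂ Q hQ f hf B
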